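/- arXiv:1702.04559 — 2 statements merged into one kernel-verified Lean document; each statement's English description precedes it below -/
import Mathlib

section
/- Let q be a prime power with q ≡ 1 (mod 6). Then there exists a permutation v of the projective line Ω = F_q ∪ {∞} such that for every g in PGL₂(q) (acting on Ω by fractional linear transformations), the number of points x ∈ Ω with v(x) = g(x) is at most 4; consequently the Hamming distance from v to every element of PGL₂(q) is at least q − 3. -/
open scoped OnePoint

open scoped Classical in
/-- The fractional linear transformation `x ↦ (a*x+b)/(c*x+d)` on the projective line
`Ω = F ∪ {∞}`, with the usual conventions at `∞` and at the pole. -/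
noncomputable def moebius {F : Type*} [Field F] (a b c d : F) : OnePoint F → OnePoint F :=
  fun x => Option.elim x (if c = 0 then ∞ else ((a / c : F) : OnePoint F))
    (fun t => if c * t + d = 0 then ∞ else (((a * t + b) / (c * t + d) : F) : OnePoint F))

/-- `PGL₂(F)` regarded as the set of permutations of the projective line `Ω = F ∪ {∞}`
induced by fractional linear transformations. -/
def PGLset (F : Type*) [Field F] : Set (Equiv.Perm (OnePoint F)) :=
  { v | ∃ a b c d : F, a * d - b * c ≠ 0 ∧ ∀ x, v x = moebius a b c d x }

/-- The Hamming distance `d(g,h) = |Ω| - |fix (g * h⁻¹)|` on the symmetric group. -/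
noncomputable def permDist {Ω : Type*} [Fintype Ω] (g h : Equiv.Perm Ω) : ℕ :=
  Fintype.card Ω - (Function.fixedPoints ⇑(g * h⁻¹)).ncard

/-- The covering radius of a set `C` of permutations:
`Cr(C) = max over v of min over c ∈ C of d(v,c)`. -/
noncomputable def coveringRadius {Ω : Type*} [Fintype Ω] (C : Set (Equiv.Perm Ω)) : ℕ :=
  sSup { n | ∃ v : Equiv.Perm Ω, n = sInf { m | ∃ c ∈ C, m = permDist v c } }

/-!
Fix a nonsquare `d` and let `v x = (x³ + 3dx) / (3x² + d)`, `v ∞ = ∞`. If `δ² = d` then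
`(x + δ)³ = (x³ + 3dx) + δ (3x² + d)`, so `v` is conjugate to cubing on the norm-one elements of
`F(δ)`, a group of order `q + 1` prime to `3`. Elementarily: as `q ≡ 1 (mod 3)`, `-3` is a square,
so `3x² + d` never vanishes, and `v t = v w` factors as `(t - w) Q(t, w) = 0` where `Q` has
discriminant `-12d (w² - d)²` in `t`, a nonsquare. An agreement `v x = g x` with `g ∈ PGL₂(q)`
clears denominators to a nonzero polynomial equation of degree at most `4`, and `∞` is a solution
only when `g` is affine, where the degree drops to `3`.
-/

open Polynomial

theorem natCast_ne_zero_of_coprime_card {F : Type*} [Field F] [Fintype F] {n : ℕ}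
    (hn : n.Coprime (Fintype.card F)) : (n : F) ≠ 0 := by
  intro h
  have hpn : ringChar F ∣ n := (ringChar.spec F n).mp h
  have hpq : ringChar F ∣ Fintype.card F := (ringChar.spec F _).mp (FiniteField.cast_card_eq_zero F)
  exact CharP.ringChar_ne_one (Nat.eq_one_of_dvd_coprimes hn hpn hpq)

theorem isSquare_neg_three_of_three_dvd_card_sub_one {F : Type*} [Field F] [Fintype F]
    (h : 3 ∣ Fintype.card F - 1) : IsSquare (-3 : F) := by
  classical
  have : Fact (Nat.Prime 3) := ⟨Nat.prime_three⟩
  obtain ⟨u, hu⟩ := exists_prime_orderOf_dvd_card (G := Fˣ) 3 (by rwa [Fintype.card_units])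
  have hu3 : (u : F) ^ 3 = 1 := by rw [← Units.val_pow_eq_pow_val, ← hu, pow_orderOf_eq_one]; rfl
  have hu1 : (u : F) - 1 ≠ 0 := by
    rw [sub_ne_zero, Ne, Units.val_eq_one, ← orderOf_eq_one_iff, hu]
    norm_num
  have hcyc : (u : F) ^ 2 + u + 1 = 0 := mul_left_cancel₀ hu1 (by linear_combination hu3)
  exact ⟨2 * u + 1, by linear_combination -4 * hcyc⟩

namespace OnePoint

variable {X : Type*} {S : Set (OnePoint X)}

theorem ncard_le_ncard_preimage_coe_add_one : S.ncard ≤ ((↑) ⁻¹' S : Set X).ncard + 1 := by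
  by_cases hS : ((↑) ⁻¹' S : Set X).Infinite
  · rw [Set.Infinite.ncard fun h => hS (h.preimage coe_injective.injOn)]
    exact Nat.zero_le _
  rw [Set.not_infinite] at hS
  have hsub : S ⊆ insert ∞ ((↑) '' ((↑) ⁻¹' S : Set X)) := by
    intro x hx
    cases x with
    | infty => exact Set.mem_insert _ _
    | coe t => exact Set.mem_insert_of_mem _ ⟨t, hx, rfl⟩
  calc S.ncard ≤ (insert ∞ ((↑) '' ((↑) ⁻¹' S : Set X))).ncard :=
        Set.ncard_le_ncard hsub ((hS.image _).insert _)
    _ ≤ ((↑) '' ((↑) ⁻¹' S : Set X) : Set (OnePoint X)).ncard + 1 := Set.ncard_insert_le _ _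
    _ = ((↑) ⁻¹' S : Set X).ncard + 1 := by
        rw [Set.ncard_image_of_injective _ coe_injective]

theorem ncard_eq_ncard_preimage_coe (hS : ∞ ∉ S) : S.ncard = ((↑) ⁻¹' S : Set X).ncard := by
  have himage : (↑) '' ((↑) ⁻¹' S : Set X) = S := by
    rw [Set.image_preimage_eq_iff]
    intro x hx
    cases x with
    | infty => exact absurd hx hS
    | coe t => exact ⟨t, rfl⟩
  nth_rw 1 [← himage]
  exact Set.ncard_image_of_injective _ coe_injective

end OnePoint

theorem ncard_preimage_coe_le_natDegree {F : Type*} [Field F] {S : Set (OnePoint F)}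
    {P : F[X]} (hP : P ≠ 0) (hS : ∀ t : F, (t : OnePoint F) ∈ S → P.eval t = 0) :
    ((↑) ⁻¹' S : Set F).ncard ≤ P.natDegree :=
  calc ((↑) ⁻¹' S : Set F).ncard ≤ (P.rootSet F).ncard :=
        Set.ncard_le_ncard fun t ht => (mem_rootSet.mpr ⟨hP, by simpa using hS t ht⟩)
    _ ≤ P.natDegree := ncard_rootSet_le P F

theorem permDist_eq_card_sub_ncard {Ω : Type*} [Fintype Ω] (v g : Equiv.Perm Ω) :
    permDist v g = Fintype.card Ω - {x | v x = g x}.ncard := by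
  have hfix : Function.fixedPoints ⇑(v * g⁻¹) = g '' {x | v x = g x} := by
    ext y
    simp [Equiv.image_eq_preimage_symm, Function.IsFixedPt]
  rw [permDist, hfix, Set.ncard_image_of_injective _ g.injective]

section Moebius

variable {F : Type*} [Field F] {a b c e : F}

theorem moebius_coe_of_ne {t : F} (h : c * t + e ≠ 0) :
    moebius a b c e t = ((a * t + b) / (c * t + e) : F) :=
  if_neg h

theorem moebius_coe_of_eq {t : F} (h : c * t + e = 0) : moebius a b c e t = ∞ :=
  if_pos h

theorem moebius_infty_of_ne (hc : c ≠ 0) : moebius a b c e ∞ = (a / c : F) :=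
  if_neg hc

end Moebius

section Redei

variable {F : Type*} [Field F] {d : F}

def redei (d : F) (x : OnePoint F) : OnePoint F :=
  x.elim ∞ fun t => ((t ^ 3 + 3 * d * t) / (3 * t ^ 2 + d) : F)

theorem three_mul_sq_add_ne_zero (hd : ¬IsSquare d) (hsq : IsSquare (-3 : F)) (t : F) :
    3 * t ^ 2 + d ≠ 0 := by
  obtain ⟨r, hr⟩ := hsq
  intro h
  exact hd ⟨r * t, by linear_combination h + t ^ 2 * hr⟩

theorem redei_cofactor_ne_zero (hd : ¬IsSquare d) (hsq : IsSquare (-3 : F)) (h2 : (2 : F) ≠ 0)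
    (h3 : (3 : F) ≠ 0) (t w : F) :
    (3 * w ^ 2 + d) * (t * t) + (-8 * d * w) * t + (d * w ^ 2 + 3 * d ^ 2) ≠ 0 := by
  obtain ⟨r, hr⟩ := hsq
  have hk : 2 * r * (w ^ 2 - d) ≠ 0 := by
    refine mul_ne_zero (mul_ne_zero h2 fun hr0 => h3 ?_) fun hw => hd ⟨w, ?_⟩
    · linear_combination -hr - r * hr0
    · linear_combination -hw
  refine quadratic_ne_zero_of_discrim_ne_sq (fun s hs => hd ?_) t
  have hdisc : discrim (3 * w ^ 2 + d) (-8 * d * w) (d * w ^ 2 + 3 * d ^ 2)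
      = (2 * r * (w ^ 2 - d)) ^ 2 * d := by
    rw [discrim]
    linear_combination 4 * d * (w ^ 2 - d) ^ 2 * hr
  have hd_eq : d = (s / (2 * r * (w ^ 2 - d))) ^ 2 := by
    rw [div_pow, eq_div_iff (pow_ne_zero 2 hk)]
    linear_combination hs - hdisc
  exact hd_eq ▸ IsSquare.sq _

theorem redei_injective (hd : ¬IsSquare d) (hsq : IsSquare (-3 : F)) (h2 : (2 : F) ≠ 0)
    (h3 : (3 : F) ≠ 0) : Function.Injective (redei d) := by
  intro x y hxy
  cases x with
  | infty => cases y with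
    | infty => rfl
    | coe w => exact absurd hxy (OnePoint.infty_ne_coe _)
  | coe t => cases y with
    | infty => exact absurd hxy (OnePoint.coe_ne_infty _)
    | coe w =>
      have hcross := (div_eq_div_iff (three_mul_sq_add_ne_zero hd hsq t)
        (three_mul_sq_add_ne_zero hd hsq w)).mp (OnePoint.coe_injective hxy)
      have hfactor : (t - w) * ((3 * w ^ 2 + d) * (t * t) + (-8 * d * w) * t
          + (d * w ^ 2 + 3 * d ^ 2)) = 0 := by
        linear_combination hcross
      rcases mul_eq_zero.mp hfactor with htw | hQ
      · rw [sub_eq_zero.mp htw]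
      · exact absurd hQ (redei_cofactor_ne_zero hd hsq h2 h3 t w)

/-- `(X³ + 3dX)(cX + e) - (aX + b)(3X² + d)`, the numerator of `redei d x - moebius a b c e x`,
expanded so that its coefficients can be read off. -/
noncomputable def agreementPoly (d a b c e : F) : F[X] :=
  C c * X ^ 4 + C (e - 3 * a) * X ^ 3 + C (3 * d * c - 3 * b) * X ^ 2
    + C (3 * d * e - a * d) * X + C (-(b * d))

variable {a b c e : F}

theorem eval_agreementPoly (t : F) : (agreementPoly d a b c e).eval t
    = (t ^ 3 + 3 * d * t) * (c * t + e) - (a * t + b) * (3 * t ^ 2 + d) := by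
  simp only [agreementPoly, eval_add, eval_mul, eval_pow, eval_C, eval_X]
  ring

theorem natDegree_agreementPoly_le : (agreementPoly d a b c e).natDegree ≤ 4 := by
  unfold agreementPoly
  compute_degree

theorem natDegree_agreementPoly_zero_le : (agreementPoly d a b 0 e).natDegree ≤ 3 := by
  simp only [agreementPoly, map_zero, zero_mul, zero_add, mul_zero, zero_sub]
  compute_degree

theorem agreementPoly_ne_zero (hd : d ≠ 0) (h2 : (2 : F) ≠ 0) (h3 : (3 : F) ≠ 0)
    (hdet : a * e - b * c ≠ 0) : agreementPoly d a b c e ≠ 0 := by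
  intro hP
  have hcoeff (n : ℕ) : (agreementPoly d a b c e).coeff n = 0 := by rw [hP, coeff_zero]
  have h4 := hcoeff 4
  have h3c := hcoeff 3
  have h2c := hcoeff 2
  have h1c := hcoeff 1
  simp only [agreementPoly, coeff_add, coeff_C_mul, coeff_X_pow, coeff_X, coeff_C] at h4 h3c h2c h1c
  norm_num at h4 h3c h2c h1c
  subst h4
  have hb : b = 0 := by simpa [h3] using h2c
  have ha : a = 0 := by
    have h8 : 2 ^ 3 * d * a = 0 := by linear_combination h1c - 3 * d * h3c
    simpa [h2, hd] using h8
  exact hdet (by rw [ha, hb]; ring)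

theorem ncard_redei_eq_moebius_le_four (hd : ¬IsSquare d) (hsq : IsSquare (-3 : F))
    (h2 : (2 : F) ≠ 0) (h3 : (3 : F) ≠ 0) (hdet : a * e - b * c ≠ 0) :
    {x | redei d x = moebius a b c e x}.ncard ≤ 4 := by
  set S := {x | redei d x = moebius a b c e x}
  have hroots (t : F) (ht : (t : OnePoint F) ∈ S) : (agreementPoly d a b c e).eval t = 0 := by
    by_cases hpole : c * t + e = 0
    · exact absurd (ht.trans (moebius_coe_of_eq hpole)) (OnePoint.coe_ne_infty _)
    · have hcross := (div_eq_div_iff (three_mul_sq_add_ne_zero hd hsq t) hpole).mp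
        (OnePoint.coe_injective (ht.trans (moebius_coe_of_ne hpole)))
      rw [eval_agreementPoly]
      linear_combination hcross
  have hd0 : d ≠ 0 := fun h => hd (h ▸ IsSquare.zero)
  have hcount := ncard_preimage_coe_le_natDegree (agreementPoly_ne_zero hd0 h2 h3 hdet) hroots
  rcases eq_or_ne c 0 with rfl | hc
  · have := natDegree_agreementPoly_zero_le (d := d) (a := a) (b := b) (e := e)
    have := OnePoint.ncard_le_ncard_preimage_coe_add_one (S := S)
    omega
  · have hinfty : ∞ ∉ S := fun h => OnePoint.infty_ne_coe _ (h.trans (moebius_infty_of_ne hc))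
    rw [OnePoint.ncard_eq_ncard_preimage_coe hinfty]
    exact hcount.trans natDegree_agreementPoly_le

end Redei

theorem exists_perm_far_from_PGL2_general
    (q : ℕ) (hmod : q % 6 = 1)
    (F : Type*) [Field F] [Fintype F] (hF : Fintype.card F = q) :
    ∃ v : Equiv.Perm (OnePoint F),
      (∀ g ∈ PGLset F, {x : OnePoint F | v x = g x}.ncard ≤ 4) ∧
      (∀ g ∈ PGLset F, q - 3 ≤ permDist v g) := by
  have h2 : (2 : F) ≠ 0 :=
    natCast_ne_zero_of_coprime_card (Nat.prime_two.coprime_iff_not_dvd.mpr (by omega))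
  have h3 : (3 : F) ≠ 0 :=
    natCast_ne_zero_of_coprime_card (Nat.prime_three.coprime_iff_not_dvd.mpr (by omega))
  have hsq : IsSquare (-3 : F) := isSquare_neg_three_of_three_dvd_card_sub_one (by omega)
  obtain ⟨d, hd⟩ := FiniteField.exists_nonsquare (F := F) fun h =>
    h2 (by exact_mod_cast (ringChar.spec F 2).mpr h.dvd)
  let v := Equiv.ofBijective (redei d) (Finite.injective_iff_bijective.mp
    (redei_injective hd hsq h2 h3))
  have hagree : ∀ g ∈ PGLset F, {x | v x = g x}.ncard ≤ 4 := by
    rintro g ⟨a, b, c, e, hdet, hg⟩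
    simpa only [hg, v, Equiv.ofBijective_apply] using
      ncard_redei_eq_moebius_le_four hd hsq h2 h3 hdet
  refine ⟨v, hagree, fun g hg => ?_⟩
  have hcard : Fintype.card (OnePoint F) = q + 1 := hF ▸ Fintype.card_option
  rw [permDist_eq_card_sub_ncard, hcard]
  have := hagree g hg
  omega

/-- If `q ≡ 1 (mod 6)` is a prime power, then there is a permutation `v` of the projective
line `Ω = F_q ∪ {∞}` agreeing with every element of `PGL₂(q)` in at most `4` points;
consequently `v` has Hamming distance at least `q - 3` from every element of `PGL₂(q)`. -/
theorem exists_perm_far_from_PGL2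
    (q : ℕ) (hq : IsPrimePow q) (hmod : q % 6 = 1)
    (F : Type*) [Field F] [Fintype F] (hF : Fintype.card F = q) :
    ∃ v : Equiv.Perm (OnePoint F),
      (∀ g ∈ PGLset F, {x : OnePoint F | v x = g x}.ncard ≤ 4) ∧
      (∀ g ∈ PGLset F, q - 3 ≤ permDist v g) :=
  exists_perm_far_from_PGL2_general q hmod F hF
end

section
/- Let q be a prime power with q ≡ 1 (mod 6), let ρ ∈ F_{q²} satisfy ρ^{q+1} = −1 and ρ ∉ F_q, let Δ = {y ∈ F_{q²} : y^{q+1} = −1}, let σ : Ω → Δ be the bijection given by σ(x) = (x + ρ)/(1 − ρx) for x ∈ F_q and σ(∞) = −1/ρ, let τ = σ⁻¹, and let h : Δ → Δ be the bijection y ↦ y³. Then for every g ∈ PGL₂(q) acting on Ω = F_q ∪ {∞} by fractional linear transformations, the number of x ∈ Ω with τ(h(σ(x))) = g(x) is at most 4. -/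
open scoped OnePoint

/-- The map `σ : Ω = F_q ∪ {∞} → F_{q²}` given by `σ(x) = (x + ρ)/(1 - ρ*x)` for
`x ∈ F_q` (embedded in `F_{q²}` via `e`) and `σ(∞) = -1/ρ`. -/
noncomputable def sigmaMap {F K : Type*} [Field F] [Field K] (e : F →+* K) (ρ : K) :
    OnePoint F → K :=
  fun x => Option.elim x (-1 / ρ) (fun t => (e t + ρ) / (1 - ρ * e t))

/-! The map `σ` is itself a fractional linear transformation, with matrix `S = [[1, ρ], [-ρ, 1]]`
of determinant `1 + ρ²`, which is nonzero because `ρ ∉ F_q`. Hence `σ` conjugates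
`g ∈ PGL₂(q)` into a fractional linear transformation `y ↦ (A y + B) / (C y + D)` of `F_{q²}`
with `A D - B C ≠ 0`. The `q`-th power Frobenius, which fixes `F_q` and sends `ρ` to `-1/ρ`,
shows that `σ` takes values in `Δ`, which is closed under cubing. So if `τ(σ(x)³) = g(x)` then
`σ(g x) = σ(x)³`, and `y = σ(x)` is a root of the nonzero polynomial `y³ (C y + D) - (A y + B)`
of degree at most `4`; since `σ` is injective, there are at most four such `x`. -/

open Polynomial in
theorem ncard_le_four_of_pow_three_mul_eq {R : Type*} [CommRing R] [IsDomain R] {A B C D : R}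
    (h : A * D - B * C ≠ 0) {s : Set R} (hs : ∀ y ∈ s, y ^ 3 * (C * y + D) = A * y + B) :
    s.ncard ≤ 4 := by
  classical
  set P : R[X] := Polynomial.C C * X ^ 4 + Polynomial.C D * X ^ 3 - Polynomial.C A * X -
    Polynomial.C B
  have hP : P ≠ 0 := by
    intro hP0
    have h4 : P.coeff 4 = C := by simp [P]
    have h3 : P.coeff 3 = D := by simp [P]
    rw [hP0, coeff_zero] at h4 h3
    exact h (by rw [← h4, ← h3]; ring)
  have hsub : s ⊆ P.roots.toFinset := fun y hy => by
    rw [Finset.mem_coe, Multiset.mem_toFinset, mem_roots hP]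
    simp only [P, IsRoot, eval_sub, eval_add, eval_mul, eval_C, eval_pow, eval_X]
    linear_combination hs y hy
  calc s.ncard ≤ (P.roots.toFinset : Set R).ncard :=
        Set.ncard_le_ncard hsub (Finset.finite_toSet _)
    _ = P.roots.toFinset.card := Set.ncard_coe_finset _
    _ ≤ Multiset.card P.roots := Multiset.toFinset_card_le _
    _ ≤ P.natDegree := card_roots' P
    _ ≤ 4 := by simp only [P]; compute_degree!

section ProjectiveLine

variable {F : Type*} [Field F]

open scoped Classical in
/-- Homogeneous coordinates `[u : v]`; `[u : 0] = ∞`, also at the junk input `(0, 0)`. -/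
noncomputable def projPoint (u v : F) : OnePoint F :=
  if v = 0 then ∞ else ((u / v : F) : OnePoint F)

theorem exists_projPoint_eq (x : OnePoint F) : ∃ u v : F, (u, v) ≠ 0 ∧ projPoint u v = x := by
  cases x with
  | infty => exact ⟨1, 0, by simp, by simp [projPoint]⟩
  | coe t => exact ⟨t, 1, by simp, by simp [projPoint]⟩

open scoped Classical in
@[simp]
theorem moebius_infty (a b c d : F) :
    moebius a b c d ∞ = if c = 0 then ∞ else ((a / c : F) : OnePoint F) := rfl

open scoped Classical in
@[simp]
theorem moebius_coe (a b c d t : F) :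
    moebius a b c d t =
      if c * t + d = 0 then ∞ else (((a * t + b) / (c * t + d) : F) : OnePoint F) :=
  rfl

theorem moebius_projPoint (a b c d : F) {u v : F} (huv : (u, v) ≠ 0) :
    moebius a b c d (projPoint u v) = projPoint (a * u + b * v) (c * u + d * v) := by
  by_cases hv : v = 0
  · have hu : u ≠ 0 := by simpa [hv] using huv
    by_cases hc : c = 0 <;> simp [projPoint, moebius_infty, hv, hc, hu, mul_div_mul_right]
  · have hcd : c * (u / v) + d = 0 ↔ c * u + d * v = 0 := by
      rw [← mul_left_inj' hv]; field_simp; ring_nf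
    simp only [projPoint, if_neg hv, moebius_coe]
    by_cases h : c * u + d * v = 0
    · rw [if_pos (hcd.mpr h), if_pos h]
    · rw [if_neg (mt hcd.mp h), if_neg h]
      congr 1; field_simp

theorem mul_add_ne_zero_of_det_ne_zero {a b c d u v : F} (hdet : a * d - b * c ≠ 0)
    (huv : (u, v) ≠ 0) : (a * u + b * v, c * u + d * v) ≠ 0 := by
  simp only [ne_eq, Prod.mk_eq_zero, not_and_or] at huv ⊢
  contrapose! huv
  obtain ⟨h1, h2⟩ := huv
  constructor
  · have : (a * d - b * c) * u = 0 := by linear_combination d * h1 - b * h2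
    simpa [hdet] using this
  · have : (a * d - b * c) * v = 0 := by linear_combination a * h2 - c * h1
    simpa [hdet] using this

end ProjectiveLine

section SigmaMap

variable {F K : Type*} [Field F] [Field K] {e : F →+* K} {ρ : K}

@[simp]
theorem sigmaMap_infty (e : F →+* K) (ρ : K) : sigmaMap e ρ ∞ = -1 / ρ := rfl

@[simp]
theorem sigmaMap_coe (e : F →+* K) (ρ : K) (t : F) :
    sigmaMap e ρ t = (e t + ρ) / (1 - ρ * e t) := rfl

theorem sub_mul_ne_zero_of_notMem_range (hρ : ρ ∉ Set.range e) {u v : F}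
    (huv : (u, v) ≠ 0) : e v - ρ * e u ≠ 0 := by
  intro h
  by_cases hu : u = 0
  · have hv : v ≠ 0 := by simpa [hu] using huv
    simp [hu, hv] at h
  · have hu' : e u ≠ 0 := by simpa using hu
    exact hρ ⟨v / u, by rw [map_div₀]; field_simp; linear_combination h⟩

theorem sigmaMap_projPoint (hρ : ρ ∉ Set.range e) {u v : F} (huv : (u, v) ≠ 0) :
    sigmaMap e ρ (projPoint u v) = (e u + ρ * e v) / (e v - ρ * e u) := by
  have hden := sub_mul_ne_zero_of_notMem_range hρ huv
  by_cases hv : v = 0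
  · have hu : e u ≠ 0 := by simpa [hv] using huv
    have hρ0 : ρ ≠ 0 := by rintro rfl; simp [hv] at hden
    simp only [projPoint, hv, ↓reduceIte, sigmaMap_infty, map_zero, mul_zero, add_zero, zero_sub]
    field_simp
  · have hv' : e v ≠ 0 := by simpa using hv
    simp only [projPoint, if_neg hv, sigmaMap_coe, map_div₀]
    field_simp

theorem exists_sigmaMap_moebius_mul_eq (hρ : ρ ∉ Set.range e) (hρ2 : 1 + ρ ^ 2 ≠ 0)
    {a b c d : F} (hdet : a * d - b * c ≠ 0) :
    ∃ A B C D : K, A * D - B * C ≠ 0 ∧ ∀ x : OnePoint F,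
      sigmaMap e ρ (moebius a b c d x) * (C * sigmaMap e ρ x + D) = A * sigmaMap e ρ x + B := by
  -- `[[A, B], [C, D]] = S * [[a, b], [c, d]] * adj S` with `S = [[1, ρ], [-ρ, 1]]`
  refine ⟨e a + ρ * e b + ρ * e c + ρ ^ 2 * e d, e b - ρ * e a + ρ * e d - ρ ^ 2 * e c,
    e c - ρ * e a + ρ * e d - ρ ^ 2 * e b, e d - ρ * e b - ρ * e c + ρ ^ 2 * e a, ?_, fun x => ?_⟩
  · have hdetK : e a * e d - e b * e c ≠ 0 := by
      simpa only [← map_mul, ← map_sub, _root_.map_ne_zero] using hdet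
    convert mul_ne_zero (pow_ne_zero 2 hρ2) hdetK using 1
    ring
  · obtain ⟨u, v, huv, rfl⟩ := exists_projPoint_eq x
    have huv' := mul_add_ne_zero_of_det_ne_zero hdet huv
    have hM := sub_mul_ne_zero_of_notMem_range hρ huv
    have hM' := sub_mul_ne_zero_of_notMem_range hρ huv'
    rw [moebius_projPoint _ _ _ _ huv, sigmaMap_projPoint hρ huv', sigmaMap_projPoint hρ huv,
      div_mul_eq_mul_div, div_eq_iff hM']
    field_simp
    simp only [map_add, map_mul]
    ring

end SigmaMap

section Frobenius

variable {F K : Type*} [Field F] [Fintype F] [Field K] {e : F →+* K} {ρ : K}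

open Polynomial in
theorem mem_range_of_pow_card_eq_self {x : K} (hx : x ^ Fintype.card F = x) :
    x ∈ Set.range e := by
  have hroots := FiniteField.roots_X_pow_card_sub_X F
  have hmap : (X ^ Fintype.card F - X : F[X]).roots.map e =
      (X ^ Fintype.card F - X : K[X]).roots := by
    rw [roots_map_of_injective_of_card_eq_natDegree e.injective] <;>
      simp [hroots, FiniteField.X_pow_card_sub_X_natDegree_eq F Fintype.one_lt_card]
  have hx' : x ∈ (X ^ Fintype.card F - X : K[X]).roots := by
    rw [mem_roots (FiniteField.X_pow_card_sub_X_ne_zero K Fintype.one_lt_card)]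
    simp [hx]
  rw [← hmap, hroots] at hx'
  simpa using hx'

theorem one_add_sq_ne_zero (hρ : ρ ∉ Set.range e) (hρΔ : ρ ^ (Fintype.card F + 1) = -1) :
    1 + ρ ^ 2 ≠ 0 := by
  intro h
  have hρ0 : ρ ≠ 0 := by rintro rfl; simp at hρ
  refine hρ (mem_range_of_pow_card_eq_self (mul_right_cancel₀ hρ0 ?_))
  linear_combination hρΔ - h

theorem sigmaMap_pow_card_add_one (hρ : ρ ∉ Set.range e)
    (hρΔ : ρ ^ (Fintype.card F + 1) = -1) (x : OnePoint F) :
    sigmaMap e ρ x ^ (Fintype.card F + 1) = -1 := by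
  obtain ⟨u, v, huv, rfl⟩ := exists_projPoint_eq x
  let := e.toAlgebra
  set φ := FiniteField.frobeniusAlgHom F K
  have hφ (z : K) : z ^ Fintype.card F = φ z := rfl
  have hφe (t : F) : φ (e t) = e t := φ.commutes t
  have hM := sub_mul_ne_zero_of_notMem_range hρ huv
  have hN : e u + ρ * e v ≠ 0 := by
    have := sub_mul_ne_zero_of_notMem_range hρ (u := v) (v := -u) (by simpa [and_comm] using huv)
    rwa [map_neg, ← neg_add', neg_ne_zero] at this
  have hρΔ' : ρ ^ Fintype.card F * ρ = -1 := by rw [← pow_succ, hρΔ]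
  have hM' : e v - ρ ^ Fintype.card F * e u ≠ 0 := by
    intro h
    exact hN (by linear_combination ρ * h + e u * hρΔ')
  rw [sigmaMap_projPoint hρ huv, pow_succ, hφ, map_div₀, map_add, map_sub, map_mul, map_mul,
    hφe, hφe, ← hφ, div_mul_div_comm, div_eq_iff (mul_ne_zero hM' hM)]
  linear_combination (e u ^ 2 + e v ^ 2) * hρΔ'

end Frobenius

theorem card_agree_tau_cube_sigma_le_four_general
    (q : ℕ)
    (F K : Type*) [Field F] [Fintype F] [Field K]
    (hF : Fintype.card F = q)
    (e : F →+* K) (ρ : K) (hρ1 : ρ ^ (q + 1) = -1) (hρ2 : ρ ∉ Set.range e)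
    (τ : K → OnePoint F)
    (hτ1 : ∀ x : OnePoint F, τ (sigmaMap e ρ x) = x)
    (hτ2 : ∀ y : K, y ^ (q + 1) = -1 → sigmaMap e ρ (τ y) = y) :
    ∀ g ∈ PGLset F,
      {x : OnePoint F | τ ((sigmaMap e ρ x) ^ 3) = g x}.ncard ≤ 4 := by
  subst hF
  rintro g ⟨a, b, c, d, hdet, hg⟩
  obtain ⟨A, B, C, D, hABCD, hconj⟩ :=
    exists_sigmaMap_moebius_mul_eq hρ2 (one_add_sq_ne_zero hρ2 hρ1) hdet
  rw [← Set.ncard_image_of_injective _ (Function.LeftInverse.injective hτ1)]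
  refine ncard_le_four_of_pow_three_mul_eq hABCD ?_
  rintro _ ⟨x, hx, rfl⟩
  have hcube : sigmaMap e ρ (g x) = sigmaMap e ρ x ^ 3 := by
    have hΔ : (sigmaMap e ρ x ^ 3) ^ (Fintype.card F + 1) = -1 := by
      rw [← pow_mul, mul_comm, pow_mul, sigmaMap_pow_card_add_one hρ2 hρ1]
      norm_num
    rw [← hx, hτ2 _ hΔ]
  rw [← hcube, hg]
  exact hconj x

/-- Let `q ≡ 1 (mod 6)` be a prime power, `K = F_{q²}`, `F = F_q` embedded in `K` via `e`,
and let `ρ ∈ K` satisfy `ρ^(q+1) = -1` and `ρ ∉ F_q`. Let `σ : Ω = F_q ∪ {∞} → K` be the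
bijection onto `Δ = {y : y^(q+1) = -1}` given by `σ(x) = (x + ρ)/(1 - ρ*x)`, `σ(∞) = -1/ρ`,
let `τ` be its inverse, and let `h : Δ → Δ` be the cube map `y ↦ y³`. Then for every
`g ∈ PGL₂(q)` acting on `Ω` by fractional linear transformations, the number of `x ∈ Ω`
with `τ(h(σ(x))) = g(x)` is at most `4`. -/
theorem card_agree_tau_cube_sigma_le_four
    (q : ℕ) (hq : IsPrimePow q) (hmod : q % 6 = 1)
    (F K : Type*) [Field F] [Fintype F] [Field K] [Fintype K]
    (hF : Fintype.card F = q) (hK : Fintype.card K = q ^ 2)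
    (e : F →+* K) (ρ : K) (hρ1 : ρ ^ (q + 1) = -1) (hρ2 : ρ ∉ Set.range e)
    (τ : K → OnePoint F)
    (hτ1 : ∀ x : OnePoint F, τ (sigmaMap e ρ x) = x)
    (hτ2 : ∀ y : K, y ^ (q + 1) = -1 → sigmaMap e ρ (τ y) = y) :
    ∀ g ∈ PGLset F,
      {x : OnePoint F | τ ((sigmaMap e ρ x) ^ 3) = g x}.ncard ≤ 4 :=
  card_agree_tau_cube_sigma_le_four_general q F K hF e ρ hρ1 hρ2 τ hτ1 hτ2
end
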